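/- arXiv:2306.01666 — 2 statements merged into one kernel-verified Lean document; each statement's English description precedes it below -/
import Mathlib

section
/- Let (R,B) be a fusion ring and φ a fixed-point-free automorphism of B of prime order p. Then the unique ring homomorphism χ: R → ℂ satisfying χ(φ(x)) = χ(x) for all x ∈ B and positive on B is FPdim. More precisely: if χ is any character of an irreducible representation of R with χ ∘ φ = χ, then by orthogonality with FPdim one derives 1 + p·(algebraic integer) = 0, a contradiction unless χ = FPdim. -/
open Finset

/-- A fusion ring with basis indexed by `Fin n`, given by its structure
constants `c`, distinguished unit basis element `one`, and duality `dual`. -/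
structure FusionData (n : ℕ) where
  c : Fin n → Fin n → Fin n → ℕ
  one : Fin n
  dual : Fin n → Fin n
  dual_dual : ∀ i, dual (dual i) = i
  c_one_left : ∀ i k, c one i k = if k = i then 1 else 0
  c_one_right : ∀ i k, c i one k = if k = i then 1 else 0
  c_dual : ∀ i j, c i j one = if j = dual i then 1 else 0
  assoc : ∀ i j l m, ∑ k, c i j k * c k l m = ∑ k, c j l k * c i k m

/-- `d` is the Frobenius–Perron dimension function: the (unique) ring
homomorphism `R → ℝ` positive on the basis. -/
def FusionData.IsFPdim {n : ℕ} (F : FusionData n) (d : Fin n → ℝ) : Prop :=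
  (∀ i, 0 < d i) ∧ ∀ i j, d i * d j = ∑ k, (F.c i j k : ℝ) * d k

/-- `φ` is a fusion-ring automorphism: a permutation of the basis fixing the
unit and preserving the structure constants. -/
def FusionData.IsAut {n : ℕ} (F : FusionData n) (φ : Equiv.Perm (Fin n)) : Prop :=
  φ F.one = F.one ∧ ∀ i j k, F.c (φ i) (φ j) (φ k) = F.c i j k

/-- `φ` is fixed-point-free: the unit is its only fixed basis element. -/
def FusionData.Fpf {n : ℕ} (F : FusionData n) (φ : Equiv.Perm (Fin n)) : Prop :=
  ∀ i, φ i = i → i = F.one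

/-- A character of the fusion ring: a unital ring homomorphism `R → ℂ`,
recorded via its values on the basis. -/
def FusionData.IsChar {n : ℕ} (F : FusionData n) (χ : Fin n → ℂ) : Prop :=
  χ F.one = 1 ∧ ∀ i j, χ i * χ j = ∑ k, (F.c i j k : ℂ) * χ k

/-!
The pairing `⟨α, β⟩ = ∑ₓ α x · β x*` of two characters satisfies `α a · ⟨α, β⟩ = ⟨α, β⟩ · β a`
by Frobenius reciprocity, so two characters with nonzero pairing coincide. For a `φ`-invariant
character `χ`, the summand `χ x · FPdim x*` is constant on the orbits of `⟨φ⟩`, all of which have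
size `p` except `{1}`. Hence `⟨χ, FPdim⟩ = 1 + p z` with `z` an algebraic integer, and this is
nonzero because `-1/p` is not an algebraic integer.
-/

theorem one_add_natCast_mul_ne_zero_of_isIntegral {K : Type*} [Field K] [CharZero K] {p : ℕ}
    (hp : p ≠ 1) {z : K} (hz : IsIntegral ℤ z) : 1 + p * z ≠ 0 := by
  intro h
  have hp0 : (p : K) ≠ 0 := fun h0 => by simp [h0] at h
  obtain ⟨k, rfl⟩ := hz.exists_int_iff_exists_rat.mp
    ⟨-1 / p, by push_cast; field_simp; linear_combination h⟩
  have hk : (1 + p * k : ℤ) = 0 := by exact_mod_cast h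
  have hdvd : (p : ℤ) ∣ 1 := ⟨-k, by linarith⟩
  exact hp (by exact_mod_cast Int.eq_one_of_dvd_one (by positivity) hdvd)

namespace MulAction

variable {G α : Type*} [Group G] [MulAction G α]

theorem card_orbit_eq_prime_of_notMem_fixedPoints {p : ℕ} (hp : p.Prime) (hG : Nat.card G = p)
    {x : α} (hx : x ∉ fixedPoints G α) : Nat.card (orbit G x) = p := by
  have hdvd : Nat.card (orbit G x) ∣ p := by
    rw [Nat.card_coe_set_eq, ← index_stabilizer, ← hG]
    exact (stabilizer G x).index_dvd_card
  refine (hp.eq_one_or_self_of_dvd _ hdvd).resolve_left fun h => hx ?_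
  rw [← subsingleton_orbit_iff_mem_fixedPoints, ← Set.subsingleton_coe]
  exact (Nat.card_eq_one_iff_unique.mp h).1

theorem exists_sum_eq_sum_fixedPoints_add_prime_smul [Fintype α]
    [DecidablePred (· ∈ fixedPoints G α)] {M : Type*} [AddCommMonoid M] {p : ℕ} (hp : p.Prime)
    (hG : Nat.card G = p) {g : α → M} (hg : ∀ (a : G) x, g (a • x) = g x) :
    ∃ s : Finset α, ∑ x, g x = ∑ x with x ∈ fixedPoints G α, g x + p • ∑ x ∈ s, g x := by
  classical
  let r : α → α := fun x => (Quotient.mk (orbitRel G α) x).out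
  have hr_eq : ∀ x y, r x = r y ↔ x ∈ orbit G y := fun x y =>
    Quotient.out_injective.eq_iff.trans Quotient.eq
  have hgr : ∀ x, g (r x) = g x := fun x => by
    obtain ⟨a, ha⟩ := (hr_eq (r x) x).mp (by simp [r])
    rw [← ha, hg]
  have hfiber : ∀ z ∉ fixedPoints G α,
      #{x | x ∉ fixedPoints G α ∧ r x = r z} = p := fun z hz => by
    rw [← card_orbit_eq_prime_of_notMem_fixedPoints hp hG hz, Nat.card_eq_card_toFinset]
    congr 1
    ext x
    simp only [mem_filter, mem_univ, true_and, Set.mem_toFinset, hr_eq]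
    refine ⟨And.right, fun hx => ⟨fun hfix => hz ?_, hx⟩⟩
    obtain ⟨a, rfl⟩ := hx
    rwa [← subsingleton_orbit_iff_mem_fixedPoints, orbit_smul,
      subsingleton_orbit_iff_mem_fixedPoints] at hfix
  set N : Finset α := {x | x ∉ fixedPoints G α}
  refine ⟨N.image r, ?_⟩
  rw [← sum_filter_add_sum_filter_not univ (· ∈ fixedPoints G α)]
  congr 1
  calc ∑ x ∈ N, g x = ∑ x ∈ N, g (r x) := by simp only [hgr]
    _ = ∑ y ∈ N.image r, #{x ∈ N | r x = y} • g y := sum_comp g r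
    _ = ∑ y ∈ N.image r, p • g y := sum_congr rfl fun y hy => by
      obtain ⟨z, hz, rfl⟩ := mem_image.mp hy
      rw [filter_filter, hfiber z (mem_filter.mp hz).2]
    _ = p • ∑ y ∈ N.image r, g y := (smul_sum ..).symm

end MulAction

namespace Equiv.Perm

variable {α M : Type*}

theorem apply_zpow_apply_eq {σ : Perm α} {g : α → M} (hg : ∀ x, g (σ x) = g x) (m : ℤ) (x : α) :
    g ((σ ^ m) x) = g x := by
  induction m using Int.induction_on generalizing x with
  | zero => rfl
  | succ k ih => rw [zpow_add_one, mul_apply, ih, hg]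
  | pred k ih => rw [zpow_sub_one, mul_apply, ih, ← hg, ← mul_apply, mul_inv_cancel, one_apply]

theorem exists_sum_eq_sum_fixed_add_prime_smul [Fintype α] [DecidableEq α] [AddCommMonoid M]
    {σ : Perm α} {p : ℕ} (hp : p.Prime) (hσ : orderOf σ = p) {g : α → M}
    (hg : ∀ x, g (σ x) = g x) :
    ∃ s : Finset α, ∑ x, g x = ∑ x with σ x = x, g x + p • ∑ x ∈ s, g x := by
  classical
  have hfix : ∀ x, x ∈ MulAction.fixedPoints (Subgroup.zpowers σ) α ↔ σ x = x := fun x =>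
    ⟨fun h => h ⟨σ, Subgroup.mem_zpowers σ⟩, by
      rintro h ⟨_, m, rfl⟩; exact MulAction.mem_fixedBy_zpow (g := σ) h m⟩
  have hzpow : ∀ (a : Subgroup.zpowers σ) x, g (a • x) = g x := by
    rintro ⟨_, m, rfl⟩ x; exact apply_zpow_apply_eq hg m x
  obtain ⟨s, hs⟩ := MulAction.exists_sum_eq_sum_fixedPoints_add_prime_smul hp
    ((Nat.card_zpowers σ).trans hσ) hzpow
  exact ⟨s, by simpa only [hfix] using hs⟩

end Equiv.Perm

namespace FusionData

variable {n : ℕ} (F : FusionData n)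

def IsMul {R : Type*} [Semiring R] (α : Fin n → R) : Prop :=
  ∀ i j, α i * α j = ∑ k, (F.c i j k : R) * α k

def charPairing {R : Type*} [Semiring R] (α β : Fin n → R) : R :=
  ∑ x, α x * β (F.dual x)

theorem dual_injective : Function.Injective F.dual :=
  Function.LeftInverse.injective F.dual_dual

theorem dual_one : F.dual F.one = F.one := by
  have h := F.c_dual F.one (F.dual F.one)
  rw [if_pos rfl, F.c_one_left] at h
  by_contra hne
  rw [if_neg (Ne.symm hne)] at h
  exact zero_ne_one h

theorem c_rotate (i j k : Fin n) : F.c i j k = F.c j (F.dual k) (F.dual i) := by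
  have h := F.assoc i j (F.dual k) F.one
  simp only [F.c_dual, F.dual_injective.eq_iff, mul_ite, mul_one, mul_zero, sum_ite_eq,
    sum_ite_eq', mem_univ, if_true] at h
  exact h

theorem mul_charPairing {R : Type*} [CommSemiring R] {α β : Fin n → R} (hα : F.IsMul α)
    (hβ : F.IsMul β) (a : Fin n) :
    α a * F.charPairing α β = F.charPairing α β * β a := by
  calc α a * F.charPairing α β = ∑ x, ∑ k, (F.c a x k : R) * (α k * β (F.dual x)) := by
        simp only [charPairing, mul_sum, ← mul_assoc, hα a, sum_mul]
    _ = ∑ x, ∑ k, (F.c a (F.dual k) x : R) * (α x * β k) := by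
        rw [sum_comm]
        refine sum_congr rfl fun x _ => ?_
        exact Fintype.sum_bijective F.dual (Function.Involutive.bijective F.dual_dual) _ _
          fun k => by rw [F.dual_dual]
    _ = F.charPairing α β * β a := by
        simp only [charPairing, sum_mul, mul_assoc, hβ _ a, mul_sum]
        refine sum_congr rfl fun x _ => sum_congr rfl fun k _ => ?_
        rw [F.c_rotate (F.dual x) a k, F.dual_dual]
        ring

variable {F}

theorem eq_of_charPairing_ne_zero {R : Type*} [CommSemiring R] [IsDomain R] {α β : Fin n → R}
    (hα : F.IsMul α) (hβ : F.IsMul β) (h : F.charPairing α β ≠ 0) : α = β :=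
  funext fun a => mul_right_cancel₀ h <| (F.mul_charPairing hα hβ a).trans (mul_comm _ _)

theorem IsMul.map {R S : Type*} [Semiring R] [Semiring S] {α : Fin n → R} (hα : F.IsMul α)
    (f : R →+* S) : F.IsMul fun i => f (α i) := fun i j => by
  rw [← map_mul, hα i j, map_sum]
  simp only [map_mul, map_natCast]

theorem IsFPdim.unique {d d' : Fin n → ℝ} (hd : F.IsFPdim d) (hd' : F.IsFPdim d') : d = d' :=
  eq_of_charPairing_ne_zero hd.2 hd'.2 <| ne_of_gt <|
    sum_pos (fun x _ => mul_pos (hd.1 x) (hd'.1 _)) ⟨F.one, mem_univ _⟩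

theorem IsFPdim.apply_one {d : Fin n → ℝ} (hd : F.IsFPdim d) : d F.one = 1 := by
  have h := hd.2 F.one F.one
  simp only [F.c_one_left, Nat.cast_ite, Nat.cast_one, Nat.cast_zero, ite_mul, one_mul,
    zero_mul, sum_ite_eq', mem_univ, if_true] at h
  exact (mul_eq_left₀ (hd.1 _).ne').mp h

theorem IsAut.apply_dual {φ : Equiv.Perm (Fin n)} (hA : F.IsAut φ) (i : Fin n) :
    φ (F.dual i) = F.dual (φ i) := by
  have h := hA.2 i (F.dual i) F.one
  rw [hA.1, F.c_dual, F.c_dual, if_pos rfl] at h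
  by_contra hne
  rw [if_neg hne] at h
  exact zero_ne_one h

theorem IsFPdim.apply_aut {d : Fin n → ℝ} (hd : F.IsFPdim d) {φ : Equiv.Perm (Fin n)}
    (hA : F.IsAut φ) (i : Fin n) : d (φ i) = d i := by
  have hdφ : F.IsFPdim (d ∘ φ) := ⟨fun i => hd.1 (φ i), fun i j => by
    rw [Function.comp_apply, Function.comp_apply, hd.2]
    exact (Fintype.sum_equiv φ _ _ fun k => by rw [Function.comp_apply, hA.2]).symm⟩
  exact congr_fun (hdφ.unique hd) i

theorem isIntegral_of_isMul {R : Type*} [CommRing R] [IsDomain R] {α : Fin n → R}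
    (hα : F.IsMul α) (hα0 : α ≠ 0) (i : Fin n) : IsIntegral ℤ (α i) := by
  set N := Submodule.span ℤ (Set.range α)
  refine isIntegral_of_smul_mem_submodule N ?_ (Submodule.fg_span (Set.finite_range α)) _ ?_
  · obtain ⟨k, hk⟩ := Function.ne_iff.mp hα0
    exact fun hN => hk ((Submodule.eq_bot_iff N).mp hN _ (Submodule.subset_span ⟨k, rfl⟩))
  · intro v hv
    induction hv using Submodule.span_induction with
    | mem _ hx =>
      obtain ⟨j, rfl⟩ := hx
      rw [smul_eq_mul, hα i j]
      refine Submodule.sum_mem _ fun k _ => ?_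
      rw [← nsmul_eq_mul]
      exact Submodule.smul_of_tower_mem _ _ (Submodule.subset_span ⟨k, rfl⟩)
    | zero => simp
    | add _ _ _ _ hx hy => rw [smul_add]; exact N.add_mem hx hy
    | smul a _ _ hx => rw [smul_comm]; exact N.smul_mem a hx

end FusionData

/-- Any character of `R` fixed by a fixed-point-free automorphism of prime
order equals `FPdim`. -/
theorem stmt0 {n p : ℕ} (hp : p.Prime) (F : FusionData n)
    (φ : Equiv.Perm (Fin n)) (hA : F.IsAut φ) (hord : orderOf φ = p)
    (hfpf : F.Fpf φ) (d : Fin n → ℝ) (hd : F.IsFPdim d)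
    (χ : Fin n → ℂ) (hχ : F.IsChar χ) (hinv : ∀ i, χ (φ i) = χ i) :
    ∀ i, χ i = (d i : ℂ) := by
  open FusionData in
  set dC : Fin n → ℂ := fun x => (d x : ℂ)
  have hdC : F.IsMul dC := IsMul.map hd.2 Complex.ofRealHom
  set g : Fin n → ℂ := fun x => χ x * dC (F.dual x)
  have hg : ∀ x, g (φ x) = g x := fun x => by
    simp only [g, dC, hinv, ← hA.apply_dual, hd.apply_aut hA]
  obtain ⟨s, hs⟩ := Equiv.Perm.exists_sum_eq_sum_fixed_add_prime_smul hp hord hg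
  have hfix : ({x | φ x = x} : Finset (Fin n)) = {F.one} := by
    ext x
    simpa using ⟨hfpf x, fun h => h ▸ hA.1⟩
  have hpair : F.charPairing χ dC = 1 + p * ∑ x ∈ s, g x := by
    rw [charPairing, hs, hfix, sum_singleton, nsmul_eq_mul]
    simp only [g, dC, hχ.1, F.dual_one, hd.apply_one, Complex.ofReal_one, mul_one]
  have hχ0 : χ ≠ 0 := fun h => by simpa [h] using hχ.1
  have hdC0 : dC ≠ 0 := fun h => (hd.1 F.one).ne' (by simpa [dC] using congr_fun h F.one)
  have hint : IsIntegral ℤ (∑ x ∈ s, g x) := IsIntegral.sum _ fun x _ =>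
    (isIntegral_of_isMul hχ.2 hχ0 x).mul (isIntegral_of_isMul hdC hdC0 _)
  exact congr_fun <| eq_of_charPairing_ne_zero hχ.2 hdC <|
    hpair ▸ one_add_natCast_mul_ne_zero_of_isIntegral hp.ne_one hint
end

section
/- Let (R,B) be a nontrivial integral fusion ring such that FPdim(x) ∈ {1, d₁, d₂} for all x ∈ B, for some positive integers d₁, d₂. Then R_pt is nontrivial, i.e., R has a nontrivial invertible basis element. -/
open Finset

lemma fd_dual_one {n : ℕ} (F : FusionData n) : F.dual F.one = F.one := by
  have h1 := F.c_dual F.one F.one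
  have h2 := F.c_one_left F.one F.one
  rw [if_pos rfl] at h2
  by_cases h : F.one = F.dual F.one
  · exact h.symm
  · rw [if_neg h] at h1; omega

lemma fd_dual_ne {n : ℕ} (F : FusionData n) {x : Fin n} (hx : x ≠ F.one) :
    F.dual x ≠ F.one := fun h => hx (by rw [← F.dual_dual x, h, fd_dual_one])

lemma fd_cyc {n : ℕ} (F : FusionData n) (i j l : Fin n) :
    F.c i j (F.dual l) = F.c j l (F.dual i) := by
  have A := F.assoc i j l F.one
  have e1 : ∑ k, F.c i j k * F.c k l F.one = F.c i j (F.dual l) := by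
    rw [Finset.sum_eq_single (F.dual l)]
    · rw [F.c_dual, F.dual_dual, if_pos rfl, mul_one]
    · intro k _ hk
      rw [F.c_dual, if_neg, mul_zero]
      intro h; exact hk (by rw [h, F.dual_dual])
    · intro h; exact absurd (Finset.mem_univ _) h
  have e2 : ∑ k, F.c j l k * F.c i k F.one = F.c j l (F.dual i) := by
    rw [Finset.sum_eq_single (F.dual i)]
    · rw [F.c_dual, if_pos rfl, mul_one]
    · intro k _ hk
      rw [F.c_dual, if_neg hk, mul_zero]
    · intro h; exact absurd (Finset.mem_univ _) h
  rw [e1, e2] at A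
  exact A

lemma fd_cyc2 {n : ℕ} (F : FusionData n) (i j k : Fin n) :
    F.c i j k = F.c (F.dual k) i (F.dual j) := by
  have := fd_cyc F (F.dual k) i j
  rw [F.dual_dual] at this
  exact this.symm

lemma main_aux {n : ℕ} (F : FusionData n) (D : Fin n → ℕ)
    (R1 : ∀ i j, D i * D j = ∑ k, F.c i j k * D k)
    (hone : D F.one = 1)
    (a b : ℕ) (hb2 : 2 ≤ b) (hba : b ≤ a)
    (hvals : ∀ x, x ≠ F.one → D x = a ∨ D x = b)
    (hea : ∃ x, x ≠ F.one ∧ D x = a)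
    (heb : ∃ x, x ≠ F.one ∧ D x = b) : False := by
  classical
  -- generic splitting of weighted sums
  have split : ∀ (f g : Fin n → ℕ), g F.one = 1 → (∀ x, x ≠ F.one → g x = a ∨ g x = b) →
      ∑ k, f k * g k = f F.one
        + (∑ k ∈ (Finset.univ.erase F.one).filter (fun k => g k = a), f k) * a
        + (∑ k ∈ (Finset.univ.erase F.one).filter (fun k => ¬ g k = a), f k) * b := by
    intro f g hg1 hg
    have h0 : ∑ k, f k * g k = f F.one * g F.one + ∑ k ∈ Finset.univ.erase F.one, f k * g k :=
      (Finset.add_sum_erase _ _ (Finset.mem_univ F.one)).symm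
    have hA : ∑ k ∈ (Finset.univ.erase F.one).filter (fun k => g k = a), f k * g k
        = (∑ k ∈ (Finset.univ.erase F.one).filter (fun k => g k = a), f k) * a := by
      rw [Finset.sum_mul]
      exact Finset.sum_congr rfl fun k hk => by rw [(Finset.mem_filter.mp hk).2]
    have hB : ∑ k ∈ (Finset.univ.erase F.one).filter (fun k => ¬ g k = a), f k * g k
        = (∑ k ∈ (Finset.univ.erase F.one).filter (fun k => ¬ g k = a), f k) * b := by
      rw [Finset.sum_mul]
      refine Finset.sum_congr rfl fun k hk => ?_
      obtain ⟨hk1, hk2⟩ := Finset.mem_filter.mp hk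
      rcases hg k (Finset.mem_erase.mp hk1).1 with h|h
      · exact absurd h hk2
      · rw [h]
    rw [h0, hg1, mul_one,
      ← Finset.sum_filter_add_sum_filter_not (Finset.univ.erase F.one) (fun k => g k = a)
        (fun k => f k * g k), hA, hB]
    ring
  have key : ∀ i j, D i * D j = F.c i j F.one
      + (∑ k ∈ (Finset.univ.erase F.one).filter (fun k => D k = a), F.c i j k) * a
      + (∑ k ∈ (Finset.univ.erase F.one).filter (fun k => ¬ D k = a), F.c i j k) * b := by
    intro i j
    rw [R1 i j]
    exact split (F.c i j) D hone hvals
  have R2 : ∀ i k, ∑ j, F.c i j k * D (F.dual j) = D i * D (F.dual k) := by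
    intro i k
    calc ∑ j, F.c i j k * D (F.dual j)
        = ∑ j, F.c (F.dual k) i (F.dual j) * D (F.dual j) :=
          Finset.sum_congr rfl fun j _ => by rw [← fd_cyc2 F i j k]
      _ = ∑ j, F.c (F.dual k) i j * D j :=
          Fintype.sum_bijective F.dual (Function.Involutive.bijective F.dual_dual) _ _
            (fun j => rfl)
      _ = D (F.dual k) * D i := (R1 _ _).symm
      _ = D i * D (F.dual k) := Nat.mul_comm _ _
  have keyE : ∀ i k, D i * D (F.dual k) = F.c i F.one k
      + (∑ j ∈ (Finset.univ.erase F.one).filter (fun j => D (F.dual j) = a), F.c i j k) * a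
      + (∑ j ∈ (Finset.univ.erase F.one).filter (fun j => ¬ D (F.dual j) = a), F.c i j k) * b := by
    intro i k
    rw [← R2 i k]
    exact split (fun j => F.c i j k) (fun j => D (F.dual j))
      (by show D (F.dual F.one) = 1; rw [fd_dual_one, hone]) (fun x hx => hvals _ (fd_dual_ne F hx))
  -- gcd a b = 1
  have hgcd : Nat.gcd a b = 1 := by
    obtain ⟨x, hxu, hxa⟩ := hea
    have hk := key x (F.dual x)
    rw [hxa] at hk
    have hu : F.c x (F.dual x) F.one = 1 := by rw [F.c_dual, if_pos rfl]
    rw [hu] at hk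
    have hg1 : Nat.gcd a b ∣ a * D (F.dual x) := Dvd.dvd.mul_right (Nat.gcd_dvd_left a b) _
    have hg2 : Nat.gcd a b ∣
        (∑ k ∈ (Finset.univ.erase F.one).filter (fun k => D k = a), F.c x (F.dual x) k) * a
        + (∑ k ∈ (Finset.univ.erase F.one).filter (fun k => ¬ D k = a), F.c x (F.dual x) k) * b :=
      dvd_add (Dvd.dvd.mul_left (Nat.gcd_dvd_left a b) _)
        (Dvd.dvd.mul_left (Nat.gcd_dvd_right a b) _)
    have h3 : a * D (F.dual x)
        - ((∑ k ∈ (Finset.univ.erase F.one).filter (fun k => D k = a), F.c x (F.dual x) k) * a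
          + (∑ k ∈ (Finset.univ.erase F.one).filter (fun k => ¬ D k = a), F.c x (F.dual x) k) * b)
        = 1 := by
      rw [hk, add_assoc]
      exact Nat.add_sub_cancel _ _
    have := Nat.dvd_sub hg1 hg2
    rw [h3] at this
    exact Nat.dvd_one.mp this
  have hneab : a ≠ b := by
    intro h
    rw [h, Nat.gcd_self] at hgcd
    omega
  have hlt : b < a := by omega
  have cop : Nat.Coprime a b := hgcd
  have cop' : Nat.Coprime b a := cop.symm
  have neOneA : ∀ z, D z = a → z ≠ F.one := by
    intro z hz h
    rw [h, hone] at hz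
    omega
  have neOneB : ∀ z, D z = b → z ≠ F.one := by
    intro z hz h
    rw [h, hone] at hz
    omega
  -- V1
  have V1 : ∀ x y, D x = b → D y = b → y ≠ F.dual x → ∀ z, D z = a → F.c x y z = 0 := by
    intro x y hx hy hyx
    have hk := key x y
    rw [hx, hy] at hk
    have hu : F.c x y F.one = 0 := by rw [F.c_dual, if_neg hyx]
    rw [hu, zero_add] at hk
    have hdvd : b ∣ ∑ k ∈ (Finset.univ.erase F.one).filter (fun k => D k = a), F.c x y k := by
      have h2 : b * b - (∑ k ∈ (Finset.univ.erase F.one).filter (fun k => ¬ D k = a), F.c x y k) * b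
          = (∑ k ∈ (Finset.univ.erase F.one).filter (fun k => D k = a), F.c x y k) * a := by
        rw [hk]
        exact Nat.add_sub_cancel _ _
      have h1 : b ∣ (∑ k ∈ (Finset.univ.erase F.one).filter (fun k => D k = a), F.c x y k) * a := by
        rw [← h2]
        exact Nat.dvd_sub (dvd_mul_right b b) (dvd_mul_left b _)
      exact cop'.dvd_of_dvd_mul_right h1
    rcases Nat.eq_zero_or_pos (∑ k ∈ (Finset.univ.erase F.one).filter (fun k => D k = a), F.c x y k) with h0|h0
    · intro z hz
      refine (Finset.sum_eq_zero_iff.mp h0) z ?_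
      exact Finset.mem_filter.mpr ⟨Finset.mem_erase.mpr ⟨neOneA z hz, Finset.mem_univ z⟩, hz⟩
    · exfalso
      have h2 : b ≤ ∑ k ∈ (Finset.univ.erase F.one).filter (fun k => D k = a), F.c x y k :=
        Nat.le_of_dvd h0 hdvd
      have h3 : b * a ≤ (∑ k ∈ (Finset.univ.erase F.one).filter (fun k => D k = a), F.c x y k) * a :=
        mul_le_mul_left h2 a
      have h4 : b * b < b * a := mul_lt_mul_of_pos_left hlt (by omega)
      have h5 : (∑ k ∈ (Finset.univ.erase F.one).filter (fun k => D k = a), F.c x y k) * a ≤ b * b := by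
        rw [hk]
        exact Nat.le_add_right _ _
      exact absurd (lt_of_lt_of_le h4 (le_trans h3 h5)) (lt_irrefl _)
  -- V2
  have V2 : ∀ i j k, D i = b → D (F.dual k) = b → k ≠ i → D (F.dual j) = a → F.c i j k = 0 := by
    intro i j k hi hk hki hj
    have hkE := keyE i k
    rw [hi, hk] at hkE
    have hu : F.c i F.one k = 0 := by rw [F.c_one_right, if_neg hki]
    rw [hu, zero_add] at hkE
    have hdvd : b ∣ ∑ j' ∈ (Finset.univ.erase F.one).filter (fun j' => D (F.dual j') = a), F.c i j' k := by
      have h2 : b * b - (∑ j' ∈ (Finset.univ.erase F.one).filter (fun j' => ¬ D (F.dual j') = a), F.c i j' k) * b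
          = (∑ j' ∈ (Finset.univ.erase F.one).filter (fun j' => D (F.dual j') = a), F.c i j' k) * a := by
        rw [hkE]
        exact Nat.add_sub_cancel _ _
      have h1 : b ∣ (∑ j' ∈ (Finset.univ.erase F.one).filter (fun j' => D (F.dual j') = a), F.c i j' k) * a := by
        rw [← h2]
        exact Nat.dvd_sub (dvd_mul_right b b) (dvd_mul_left b _)
      exact cop'.dvd_of_dvd_mul_right h1
    rcases Nat.eq_zero_or_pos (∑ j' ∈ (Finset.univ.erase F.one).filter (fun j' => D (F.dual j') = a), F.c i j' k) with h0|h0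
    · refine (Finset.sum_eq_zero_iff.mp h0) j ?_
      have hju : j ≠ F.one := by
        intro h
        rw [h, fd_dual_one, hone] at hj
        omega
      exact Finset.mem_filter.mpr ⟨Finset.mem_erase.mpr ⟨hju, Finset.mem_univ j⟩, hj⟩
    · exfalso
      have h2 : b ≤ ∑ j' ∈ (Finset.univ.erase F.one).filter (fun j' => D (F.dual j') = a), F.c i j' k :=
        Nat.le_of_dvd h0 hdvd
      have h3 : b * a ≤ (∑ j' ∈ (Finset.univ.erase F.one).filter (fun j' => D (F.dual j') = a), F.c i j' k) * a :=
        mul_le_mul_left h2 a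
      have h4 : b * b < b * a := mul_lt_mul_of_pos_left hlt (by omega)
      have h5 : (∑ j' ∈ (Finset.univ.erase F.one).filter (fun j' => D (F.dual j') = a), F.c i j' k) * a ≤ b * b := by
        rw [hkE]
        exact Nat.le_add_right _ _
      exact absurd (lt_of_lt_of_le h4 (le_trans h3 h5)) (lt_irrefl _)
  -- T2 is empty
  have T2empty : ∀ t, D t = b → D (F.dual t) = a → False := by
    intro t htb hta
    set T2 : Finset (Fin n) := Finset.univ.filter (fun k => D k = b ∧ D (F.dual k) = a) with hT2def
    have htT2 : t ∈ T2 := Finset.mem_filter.mpr ⟨Finset.mem_univ t, htb, hta⟩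
    have P1 : ∀ t', t' ∈ T2 → ∑ k ∈ T2, F.c t t' k = b := by
      intro t' ht'
      obtain ⟨-, ht'b, ht'a⟩ := Finset.mem_filter.mp ht'
      have hne' : t' ≠ F.dual t := by
        intro h
        rw [h] at ht'b
        omega
      have hk := key t t'
      rw [htb, ht'b] at hk
      have hu : F.c t t' F.one = 0 := by rw [F.c_dual, if_neg hne']
      rw [hu, zero_add] at hk
      have hSa0 : ∑ k ∈ (Finset.univ.erase F.one).filter (fun k => D k = a), F.c t t' k = 0 :=
        Finset.sum_eq_zero fun k hkm => V1 t t' htb ht'b hne' k (Finset.mem_filter.mp hkm).2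
      rw [hSa0, zero_mul, zero_add] at hk
      have hSbb : ∑ k ∈ (Finset.univ.erase F.one).filter (fun k => ¬ D k = a), F.c t t' k = b :=
        Nat.eq_of_mul_eq_mul_right (by omega) hk.symm
      have hsub : T2 ⊆ (Finset.univ.erase F.one).filter (fun k => ¬ D k = a) := by
        intro k hkm
        obtain ⟨-, hkb, hka⟩ := Finset.mem_filter.mp hkm
        refine Finset.mem_filter.mpr ⟨Finset.mem_erase.mpr ⟨neOneB k hkb, Finset.mem_univ k⟩, ?_⟩
        rw [hkb]
        omega
      have hvanish : ∀ k ∈ (Finset.univ.erase F.one).filter (fun k => ¬ D k = a), k ∉ T2 → F.c t t' k = 0 := by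
        intro k hkm hknot
        obtain ⟨hk1, hk2⟩ := Finset.mem_filter.mp hkm
        have hku := (Finset.mem_erase.mp hk1).1
        have hkb : D k = b := by
          rcases hvals k hku with h|h
          · exact absurd h hk2
          · exact h
        have hkEb : D (F.dual k) = b := by
          rcases hvals (F.dual k) (fd_dual_ne F hku) with h|h
          · exact absurd (Finset.mem_filter.mpr ⟨Finset.mem_univ k, hkb, h⟩) hknot
          · exact h
        have hkt : k ≠ t := by
          intro h
          rw [h] at hkEb
          omega
        exact V2 t t' k htb hkEb hkt ht'a
      rw [← hSbb]
      exact Finset.sum_subset hsub hvanish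
    have count1 : ∑ k ∈ T2, (∑ j, F.c t j k * D (F.dual j)) = ∑ k ∈ T2, b * a := by
      refine Finset.sum_congr rfl fun k hkm => ?_
      obtain ⟨-, hkb, hka⟩ := Finset.mem_filter.mp hkm
      rw [R2 t k, htb, hka]
    have count2 : ∑ k ∈ T2, ∑ j, F.c t j k * D (F.dual j)
        = ∑ j, ∑ k ∈ T2, F.c t j k * D (F.dual j) := Finset.sum_comm
    have hOneNot : F.one ∉ T2 := by
      intro h
      obtain ⟨-, h1, -⟩ := Finset.mem_filter.mp h
      rw [hone] at h1
      omega
    have count3 : (∑ k ∈ T2, F.c t F.one k * D (F.dual F.one))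
        + ∑ j ∈ T2, ∑ k ∈ T2, F.c t j k * D (F.dual j)
        ≤ ∑ j, ∑ k ∈ T2, F.c t j k * D (F.dual j) := by
      have h1 : ∑ j ∈ insert F.one T2, (∑ k ∈ T2, F.c t j k * D (F.dual j))
          = (∑ k ∈ T2, F.c t F.one k * D (F.dual F.one))
            + ∑ j ∈ T2, ∑ k ∈ T2, F.c t j k * D (F.dual j) :=
        Finset.sum_insert hOneNot
      rw [← h1]
      exact Finset.sum_le_sum_of_subset (Finset.subset_univ _)
    have count4 : ∑ k ∈ T2, F.c t F.one k * D (F.dual F.one) = 1 := by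
      simp only [fd_dual_one, hone, mul_one, F.c_one_right]
      rw [Finset.sum_ite_eq' T2 t (fun _ => 1), if_pos htT2]
    have count5 : ∑ j ∈ T2, ∑ k ∈ T2, F.c t j k * D (F.dual j) = ∑ j ∈ T2, b * a := by
      refine Finset.sum_congr rfl fun j hjm => ?_
      obtain ⟨-, hjb, hja⟩ := Finset.mem_filter.mp hjm
      calc ∑ k ∈ T2, F.c t j k * D (F.dual j) = ∑ k ∈ T2, F.c t j k * a := by
            simp only [hja]
        _ = (∑ k ∈ T2, F.c t j k) * a := (Finset.sum_mul _ _ _).symm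
        _ = b * a := by rw [P1 j hjm]
    have final : ∑ k ∈ T2, b * a ≥ 1 + ∑ j ∈ T2, b * a := by
      calc 1 + ∑ j ∈ T2, b * a
          = (∑ k ∈ T2, F.c t F.one k * D (F.dual F.one))
            + ∑ j ∈ T2, ∑ k ∈ T2, F.c t j k * D (F.dual j) := by rw [count4, count5]
        _ ≤ ∑ j, ∑ k ∈ T2, F.c t j k * D (F.dual j) := count3
        _ = ∑ k ∈ T2, ∑ j, F.c t j k * D (F.dual j) := count2.symm
        _ = ∑ k ∈ T2, b * a := count1
    omega
  have hEb : ∀ x, x ≠ F.one → D x = b → D (F.dual x) = b := by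
    intro x hx hxb
    rcases hvals (F.dual x) (fd_dual_ne F hx) with h|h
    · exact (T2empty x hxb h).elim
    · exact h
  have hEa : ∀ w, w ≠ F.one → D w = a → D (F.dual w) = a := by
    intro w hw hwa
    rcases hvals (F.dual w) (fd_dual_ne F hw) with h|h
    · exact h
    · exact (T2empty (F.dual w) h (by rw [F.dual_dual]; exact hwa)).elim
  -- claim A
  have claimA : ∀ x w, D x = b → D w = a → F.c x w x = 0 := by
    intro x w hx hw
    by_contra hne0
    have hγpos : 0 < F.c x w x := Nat.pos_of_ne_zero hne0
    have hk := key x w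
    rw [hx, hw] at hk
    have hu : F.c x w F.one = 0 := by
      rw [F.c_dual, if_neg]
      intro h
      have hEbx := hEb x (neOneB x hx) hx
      rw [h, hEbx] at hw
      omega
    rw [hu, zero_add] at hk
    have hSb : ∑ k ∈ (Finset.univ.erase F.one).filter (fun k => ¬ D k = a), F.c x w k = F.c x w x := by
      apply Finset.sum_eq_single_of_mem x
      · refine Finset.mem_filter.mpr ⟨Finset.mem_erase.mpr ⟨neOneB x hx, Finset.mem_univ x⟩, ?_⟩
        rw [hx]
        omega
      · intro k hkmem hkx
        obtain ⟨hk1, hk2⟩ := Finset.mem_filter.mp hkmem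
        have hku := (Finset.mem_erase.mp hk1).1
        have hkb : D k = b := by
          rcases hvals k hku with h|h
          · exact absurd h hk2
          · exact h
        exact V2 x w k hx (hEb k hku hkb) hkx (hEa w (neOneA w hw) hw)
    rw [hSb] at hk
    have hdvd : a ∣ F.c x w x := by
      have h2 : b * a - (∑ k ∈ (Finset.univ.erase F.one).filter (fun k => D k = a), F.c x w k) * a
          = F.c x w x * b := by
        rw [hk]
        exact Nat.add_sub_cancel_left _ _
      have h1 : a ∣ F.c x w x * b := by
        rw [← h2]
        exact Nat.dvd_sub (dvd_mul_left a b) (dvd_mul_left a _)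
      exact cop.dvd_of_dvd_mul_right h1
    have hγa : a ≤ F.c x w x := Nat.le_of_dvd hγpos hdvd
    have hkE2 := keyE x x
    rw [hx, hEb x (neOneB x hx) hx] at hkE2
    have hu2 : F.c x F.one x = 1 := by rw [F.c_one_right, if_pos rfl]
    rw [hu2] at hkE2
    have hwQ : w ∈ (Finset.univ.erase F.one).filter (fun j => D (F.dual j) = a) :=
      Finset.mem_filter.mpr ⟨Finset.mem_erase.mpr ⟨neOneA w hw, Finset.mem_univ w⟩,
        hEa w (neOneA w hw) hw⟩
    have hsingle : F.c x w x ≤ ∑ j ∈ (Finset.univ.erase F.one).filter (fun j => D (F.dual j) = a), F.c x j x :=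
      Finset.single_le_sum (f := fun j => F.c x j x) (fun _ _ => Nat.zero_le _) hwQ
    have h6 : a * a ≤ (∑ j ∈ (Finset.univ.erase F.one).filter (fun j => D (F.dual j) = a), F.c x j x) * a :=
      mul_le_mul_left (le_trans hγa hsingle) a
    have h7 : b * b < a * a := Nat.mul_lt_mul_of_lt_of_le hlt (le_of_lt hlt) (by omega)
    have h8 : (∑ j ∈ (Finset.univ.erase F.one).filter (fun j => D (F.dual j) = a), F.c x j x) * a ≤ b * b := by
      rw [hkE2]
      exact le_trans (Nat.le_add_left _ 1) (Nat.le_add_right _ _)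
    exact absurd (lt_of_lt_of_le h7 (le_trans h6 h8)) (lt_irrefl _)
  -- final contradiction
  obtain ⟨x, hxu, hxb⟩ := heb
  have hkE := keyE x x
  rw [hxb, hEb x hxu hxb] at hkE
  have hu : F.c x F.one x = 1 := by rw [F.c_one_right, if_pos rfl]
  rw [hu] at hkE
  have hQa0 : ∑ j ∈ (Finset.univ.erase F.one).filter (fun j => D (F.dual j) = a), F.c x j x = 0 := by
    refine Finset.sum_eq_zero fun j hjm => ?_
    obtain ⟨hj1, hj2⟩ := Finset.mem_filter.mp hjm
    have hju := (Finset.mem_erase.mp hj1).1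
    have hja : D j = a := by
      rcases hvals j hju with h|h
      · exact h
      · exact (T2empty j h hj2).elim
    exact claimA x j hxb hja
  rw [hQa0, zero_mul, add_zero] at hkE
  have hbdvd : b ∣ 1 := by
    have h2 : b * b - (∑ j ∈ (Finset.univ.erase F.one).filter (fun j => ¬ D (F.dual j) = a), F.c x j x) * b = 1 := by
      rw [hkE, Nat.add_comm]
      exact Nat.add_sub_cancel_left _ _
    rw [← h2]
    exact Nat.dvd_sub (dvd_mul_right b b) (dvd_mul_left b _)
  have := Nat.dvd_one.mp hbdvd
  omega


theorem stmt18 {n : ℕ} (F : FusionData n) (hn : 1 < n)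
    (d : Fin n → ℝ) (hd : F.IsFPdim d)
    (hint : ∀ i, ∃ m : ℤ, d i = (m : ℝ))
    (d1 d2 : ℕ) (hd1 : 0 < d1) (hd2 : 0 < d2)
    (hvals : ∀ x, d x = 1 ∨ d x = (d1 : ℝ) ∨ d x = (d2 : ℝ)) :
    ∃ x, x ≠ F.one ∧ d x = 1 := by
  classical
  by_contra hcon
  push_neg at hcon
  have hpos := hd.1
  have honeR : d F.one = 1 := by
    have h := hd.2 F.one F.one
    have h2 : ∑ k, (F.c F.one F.one k : ℝ) * d k = d F.one := by
      rw [Finset.sum_eq_single F.one]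
      · rw [F.c_one_left, if_pos rfl]; norm_num
      · intro k _ hk
        rw [F.c_one_left, if_neg hk]; norm_num
      · intro h; exact absurd (Finset.mem_univ _) h
    rw [h2] at h
    exact mul_left_cancel₀ (ne_of_gt (hpos F.one)) (by rw [h, mul_one])
  set D : Fin n → ℕ := fun i => if d i = 1 then 1 else if d i = (d1 : ℝ) then d1 else d2 with hDdef
  have hD : ∀ i, d i = (D i : ℝ) := by
    intro i
    simp only [hDdef]
    by_cases h1 : d i = 1
    · rw [if_pos h1, h1]; norm_num
    · rw [if_neg h1]
      by_cases h2 : d i = (d1 : ℝ)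
      · rw [if_pos h2]; exact h2
      · rw [if_neg h2]
        rcases hvals i with h|h|h
        · exact absurd h h1
        · exact absurd h h2
        · exact h
  have hone : D F.one = 1 := by
    have h := hD F.one
    rw [honeR] at h
    exact_mod_cast h.symm
  have R1 : ∀ i j, D i * D j = ∑ k, F.c i j k * D k := by
    intro i j
    have h := hd.2 i j
    simp only [hD] at h
    exact_mod_cast h
  have h2 : ∀ x, x ≠ F.one → 2 ≤ D x := by
    intro x hx
    have hne1 : d x ≠ 1 := hcon x hx
    have hp : (0 : ℝ) < (D x : ℝ) := by rw [← hD x]; exact hpos x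
    have hp' : 0 < D x := by exact_mod_cast hp
    have hne1' : D x ≠ 1 := by
      intro h
      exact hne1 (by rw [hD x, h]; norm_num)
    omega
  have hvalsN : ∀ x, x ≠ F.one → D x = d1 ∨ D x = d2 := by
    intro x hx
    rcases hvals x with h|h|h
    · exact absurd h (hcon x hx)
    · left
      have h4 := hD x
      rw [h] at h4
      exact_mod_cast h4.symm
    · right
      have h4 := hD x
      rw [h] at h4
      exact_mod_cast h4.symm
  obtain ⟨x₀, hx₀⟩ := Fintype.exists_ne_of_one_lt_card (by rwa [Fintype.card_fin]) F.one
  by_cases hsame : ∀ y, y ≠ F.one → D y = D x₀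
  · exact main_aux F D R1 hone (D x₀) (D x₀) (h2 x₀ hx₀) le_rfl
      (fun z hz => Or.inl (hsame z hz)) ⟨x₀, hx₀, rfl⟩ ⟨x₀, hx₀, rfl⟩
  · push_neg at hsame
    obtain ⟨y₀, hy₀u, hy₀ne⟩ := hsame
    have hvals2 : ∀ z, z ≠ F.one → D z = D x₀ ∨ D z = D y₀ := by
      intro z hz
      rcases hvalsN z hz with h|h <;> rcases hvalsN x₀ hx₀ with h1|h1 <;>
        rcases hvalsN y₀ hy₀u with h3|h3 <;> omega
    rcases le_total (D x₀) (D y₀) with hle|hle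
    · exact main_aux F D R1 hone (D y₀) (D x₀) (h2 x₀ hx₀) hle
        (fun z hz => (hvals2 z hz).symm) ⟨y₀, hy₀u, rfl⟩ ⟨x₀, hx₀, rfl⟩
    · exact main_aux F D R1 hone (D x₀) (D y₀) (h2 y₀ hy₀u) hle
        (fun z hz => hvals2 z hz) ⟨x₀, hx₀, rfl⟩ ⟨y₀, hy₀u, rfl⟩
end
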